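/- Every comparator circuit with ℓ > 0 wires has an equivalent comparator circuit (computing the same Boolean function) with ℓ wires and at most ℓ·(ℓ−1)/2 gates. -/

import Mathlib

/-- A comparator circuit on `n` Boolean variables with `ℓ` wires.
Each wire is labelled by a literal: a pair `(i, neg)` meaning the variable `x_i`
if `neg = false` and its negation `¬x_i` if `neg = true`.  Each gate is an ordered
pair of distinct wires `(w, w')`: applying it, `w` receives the conjunction of the
two held values and `w'` receives their disjunction.  A designated output wire
carries the result of the computation. -/
structure CompCircuit (n ℓ : ℕ) where
  label : Fin ℓ → Fin n × Bool
  gates : List (Fin ℓ × Fin ℓ)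
  distinct : ∀ g ∈ gates, g.1 ≠ g.2
  out : Fin ℓ

namespace CompCircuit

variable {n ℓ : ℕ}

/-- Value of the literal `(i, neg)` on input `x`. -/
def litVal (x : Fin n → Bool) (p : Fin n × Bool) : Bool :=
  if p.2 then !(x p.1) else x p.1

/-- Applying a comparator gate to the current wire values. -/
def applyGate (g : Fin ℓ × Fin ℓ) (v : Fin ℓ → Bool) : Fin ℓ → Bool :=
  fun w => if w = g.1 then v g.1 && v g.2 else if w = g.2 then v g.1 || v g.2 else v w

/-- Initial wire values on input `x`: each wire holds the value of its literal. -/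
def init (C : CompCircuit n ℓ) (x : Fin n → Bool) : Fin ℓ → Bool :=
  fun w => litVal x (C.label w)

/-- Wire values after all the gates have been applied in order. -/
def run (C : CompCircuit n ℓ) (x : Fin n → Bool) : Fin ℓ → Bool :=
  C.gates.foldl (fun v g => applyGate g v) (C.init x)

/-- The output of the circuit: the final value of the output wire. -/
def eval (C : CompCircuit n ℓ) (x : Fin n → Bool) : Bool :=
  C.run x C.out

/-- Wire values after the first `t` gates have been applied (i.e. just before gate `t`). -/
def stateAfter (C : CompCircuit n ℓ) (x : Fin n → Bool) (t : ℕ) : Fin ℓ → Bool :=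
  (C.gates.take t).foldl (fun v g => applyGate g v) (C.init x)

/-- The pair `(u_g(x), v_g(x))` of in-values of gate number `i` on input `x`. -/
def gateIn (C : CompCircuit n ℓ) (x : Fin n → Bool) (i : Fin C.gates.length) : Bool × Bool :=
  (C.stateAfter x i (C.gates.get i).1, C.stateAfter x i (C.gates.get i).2)

/-- Gate `i` is TYPE-1 useless: its in-values never form the pair `(1,0)`,
i.e. they always lie in `{(0,1),(0,0),(1,1)}`. -/
def Type1UselessAt (C : CompCircuit n ℓ) (i : Fin C.gates.length) : Prop :=
  ∀ x : Fin n → Bool, C.gateIn x i ≠ (true, false)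

/-- Gate `i` is TYPE-2 useless: its in-values never form the pair `(0,1)`,
i.e. they always lie in `{(1,0),(0,0),(1,1)}`. -/
def Type2UselessAt (C : CompCircuit n ℓ) (i : Fin C.gates.length) : Prop :=
  ∀ x : Fin n → Bool, C.gateIn x i ≠ (false, true)

/-- Gate `i` is useless if it is TYPE-1 or TYPE-2 useless. -/
def UselessAt (C : CompCircuit n ℓ) (i : Fin C.gates.length) : Prop :=
  C.Type1UselessAt i ∨ C.Type2UselessAt i

end CompCircuit

/-!
A gate whose inputs are never `(1, 0)` acts as the identity, and one whose inputs are never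
`(0, 1)` swaps its two wires; either can be deleted after renaming the wires in the rest of the
circuit. Hence a circuit with the fewest gates among its equivalents has only useful gates.

View every wire as the Boolean function of the input that it carries, and count the ordered pairs
of distinct wires carrying comparable functions; there are at most `ℓ (ℓ - 1)` of them. A useful
gate on wires `a, b` finds incomparable `f, g` and replaces them by the comparable `f ⊓ g, f ⊔ g`.
A third function comparable to `f` is comparable to `f ⊓ g` or to `f ⊔ g`, and one comparable to
both `f` and `g` is comparable to both `f ⊓ g` and `f ⊔ g`, so the old comparable pairs inject into
the new ones, which moreover contain `(a, b)` and `(b, a)`. The count thus grows by two per gate.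
-/

open Finset Relation

local infix:50 " ≶ " => SymmGen (· ≤ ·)

section Comparator

variable {ι β : Type*} [DecidableEq ι] [Lattice β]

theorem symmGen_inf_sup_or_sup_inf (h f g : β) :
    ((h ≶ f → h ≶ f ⊓ g) ∧ (h ≶ g → h ≶ f ⊔ g)) ∨
      ((h ≶ f → h ≶ f ⊔ g) ∧ (h ≶ g → h ≶ f ⊓ g)) := by
  have hf : h ≶ f → h ≶ f ⊓ g ∨ h ≶ f ⊔ g := by
    rintro (hle | hge)
    exacts [.inr (.of_le (le_sup_of_le_left hle)), .inl (.of_ge (inf_le_of_left_le hge))]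
  have hg : h ≶ g → h ≶ f ⊓ g ∨ h ≶ f ⊔ g := by
    rintro (hle | hge)
    exacts [.inr (.of_le (le_sup_of_le_right hle)), .inl (.of_ge (inf_le_of_right_le hge))]
  have hfg : h ≶ f → h ≶ g → h ≶ f ⊓ g ∧ h ≶ f ⊔ g := by
    rintro (hf | hf) (hg | hg)
    · exact ⟨.of_le (le_inf hf hg), .of_le (le_sup_of_le_left hf)⟩
    · exact ⟨.of_ge (inf_le_of_right_le hg), .of_le (le_sup_of_le_left hf)⟩
    · exact ⟨.of_ge (inf_le_of_left_le hf), .of_le (le_sup_of_le_right hg)⟩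
    · exact ⟨.of_ge (inf_le_of_left_le hf), .of_ge (sup_le hf hg)⟩
  generalize (h ≶ f) = P, (h ≶ g) = Q, (h ≶ f ⊓ g) = I, (h ≶ f ⊔ g) = S at *
  tauto

def comparator (a b : ι) (F : ι → β) : ι → β :=
  fun w => if w = a then F a ⊓ F b else if w = b then F a ⊔ F b else F w

variable {F : ι → β} {a b c x : ι}

@[simp]
theorem comparator_left : comparator a b F a = F a ⊓ F b := if_pos rfl

@[simp]
theorem comparator_right (hab : a ≠ b) : comparator a b F b = F a ⊔ F b := by
  simp [comparator, hab.symm]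

theorem comparator_of_ne (hxa : x ≠ a) (hxb : x ≠ b) : comparator a b F x = F x := by
  simp [comparator, hxa, hxb]

open Classical in
/-- The identity or the transposition of `a` and `b`, chosen so that wires comparable to `c` before
the comparator are carried to wires comparable to `c` after it
(see `symmGen_comparator_realign`). -/
noncomputable def realign (F : ι → β) (a b c : ι) : Equiv.Perm ι :=
  if (F c ≶ F a → F c ≶ F a ⊓ F b) ∧ (F c ≶ F b → F c ≶ F a ⊔ F b) then 1
  else Equiv.swap a b

theorem realign_of_mem (hc : c = a ∨ c = b) : realign F a b c = 1 := by
  refine if_pos ⟨fun _ => ?_, fun _ => ?_⟩ <;> rcases hc with rfl | rfl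
  exacts [.of_ge inf_le_left, .of_ge inf_le_right, .of_le le_sup_left, .of_le le_sup_right]

theorem realign_apply_of_ne (hxa : x ≠ a) (hxb : x ≠ b) : realign F a b c x = x := by
  unfold realign
  split_ifs
  exacts [rfl, Equiv.swap_apply_of_ne_of_ne hxa hxb]

theorem realign_apply_mem (hx : x = a ∨ x = b) :
    realign F a b c x = a ∨ realign F a b c x = b := by
  unfold realign
  split_ifs <;> rcases hx with rfl | rfl <;> simp

theorem realign_apply_ne (hca : c ≠ a) (hcb : c ≠ b) (hxc : x ≠ c) : realign F a b c x ≠ c := by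
  by_cases hx : x = a ∨ x = b
  · rcases realign_apply_mem (F := F) (c := c) hx with h | h <;> rw [h]
    exacts [hca.symm, hcb.symm]
  · push Not at hx
    rwa [realign_apply_of_ne hx.1 hx.2]

theorem symmGen_comparator_realign (hab : a ≠ b) (hca : c ≠ a) (hcb : c ≠ b) (h : F c ≶ F x) :
    comparator a b F c ≶ comparator a b F (realign F a b c x) := by
  rw [comparator_of_ne hca hcb]
  unfold realign
  split_ifs with hkeep
  · rcases eq_or_ne x a with rfl | hxa
    · simpa using hkeep.1 h
    rcases eq_or_ne x b with rfl | hxb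
    · simpa [hab] using hkeep.2 h
    simpa [comparator_of_ne hxa hxb] using h
  · have hflip := (symmGen_inf_sup_or_sup_inf (F c) (F a) (F b)).resolve_left hkeep
    rcases eq_or_ne x a with rfl | hxa
    · simpa [hab] using hflip.1 h
    rcases eq_or_ne x b with rfl | hxb
    · simpa using hflip.2 h
    simpa [Equiv.swap_apply_of_ne_of_ne hxa hxb, comparator_of_ne hxa hxb] using h

noncomputable def realignPair (F : ι → β) (a b : ι) (p : ι × ι) : ι × ι :=
  if p.1 = a ∨ p.1 = b then (realign F a b p.2 p.1, p.2) else (p.1, realign F a b p.1 p.2)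

theorem realignPair_injective : (realignPair F a b).Injective := by
  rintro ⟨p₁, p₂⟩ ⟨q₁, q₂⟩ h
  unfold realignPair at h
  split_ifs at h with hp hq hq <;> obtain ⟨h₁, h₂⟩ := Prod.mk.inj h <;> dsimp only at *
  · subst h₂
    rw [(realign F a b p₂).injective h₁]
  · exact absurd (h₁ ▸ realign_apply_mem hp) hq
  · exact absurd (h₁ ▸ realign_apply_mem hq) hp
  · subst h₁
    rw [(realign F a b p₁).injective h₂]

end Comparator

section ComparablePairs

variable {ι β : Type*} [Fintype ι] [DecidableEq ι] [Lattice β] {F : ι → β} {a b : ι}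

open Classical in
noncomputable def comparablePairs (F : ι → β) : Finset (ι × ι) :=
  {p | p.1 ≠ p.2 ∧ F p.1 ≶ F p.2}

@[simp]
theorem mem_comparablePairs {p : ι × ι} : p ∈ comparablePairs F ↔ p.1 ≠ p.2 ∧ F p.1 ≶ F p.2 := by
  simp [comparablePairs]

theorem card_comparablePairs_le (F : ι → β) :
    #(comparablePairs F) ≤ Fintype.card ι * (Fintype.card ι - 1) := by
  calc #(comparablePairs F) ≤ #(univ : Finset ι).offDiag :=
        card_le_card fun p hp => by simpa using (mem_comparablePairs.mp hp).1
    _ = Fintype.card ι * (Fintype.card ι - 1) := by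
        rw [offDiag_card, card_univ, Nat.mul_sub_one]

theorem realignPair_mem_comparablePairs (hab : a ≠ b) (hinc : ¬ F a ≶ F b) {p : ι × ι}
    (hp : p ∈ comparablePairs F) : realignPair F a b p ∈ comparablePairs (comparator a b F) := by
  obtain ⟨hne, hp⟩ := mem_comparablePairs.mp hp
  unfold realignPair
  split_ifs with hp₁
  · have hp₂ : p.2 ≠ a ∧ p.2 ≠ b := by
      refine ⟨fun h => ?_, fun h => ?_⟩ <;> rcases hp₁ with h₁ | h₁ <;> rw [h₁, h] at hp hne
      exacts [hne rfl, hinc hp.symm, hinc hp, hne rfl]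
    exact mem_comparablePairs.mpr ⟨realign_apply_ne hp₂.1 hp₂.2 hne,
      (symmGen_comparator_realign hab hp₂.1 hp₂.2 hp.symm).symm⟩
  · push Not at hp₁
    exact mem_comparablePairs.mpr ⟨(realign_apply_ne hp₁.1 hp₁.2 hne.symm).symm,
      symmGen_comparator_realign hab hp₁.1 hp₁.2 hp⟩

theorem card_comparablePairs_add_two_le (hab : a ≠ b) (hinc : ¬ F a ≶ F b) :
    #(comparablePairs F) + 2 ≤ #(comparablePairs (comparator a b F)) := by
  have hab_mem : (a, b) ∉ comparablePairs F := fun h => hinc (mem_comparablePairs.mp h).2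
  have hba_mem : (b, a) ∉ comparablePairs F := fun h => hinc (mem_comparablePairs.mp h).2.symm
  have hmaps : ∀ p ∈ insert (a, b) (insert (b, a) (comparablePairs F)),
      realignPair F a b p ∈ comparablePairs (comparator a b F) := by
    intro p hp
    rcases mem_insert.mp hp with rfl | hp
    · simpa [realignPair, realign_of_mem, hab] using SymmGen.of_le inf_le_sup
    rcases mem_insert.mp hp with rfl | hp
    · simpa [realignPair, realign_of_mem, hab, hab.symm] using SymmGen.of_ge inf_le_sup
    exact realignPair_mem_comparablePairs hab hinc hp
  calc #(comparablePairs F) + 2 = #(insert (a, b) (insert (b, a) (comparablePairs F))) := by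
        rw [card_insert_of_notMem, card_insert_of_notMem hba_mem]
        simpa [hab] using hab_mem
    _ ≤ #(comparablePairs (comparator a b F)) :=
        card_le_card_of_injOn _ hmaps realignPair_injective.injOn

end ComparablePairs

namespace CompCircuit

variable {n ℓ : ℕ} (C : CompCircuit n ℓ)

theorem stateAfter_succ (x : Fin n → Bool) {t : ℕ} (ht : t < C.gates.length) :
    C.stateAfter x (t + 1) = applyGate C.gates[t] (C.stateAfter x t) := by
  rw [stateAfter, stateAfter, List.take_add_one, List.foldl_append, List.getElem?_eq_getElem ht]
  rfl

theorem run_eq_foldl_drop (x : Fin n → Bool) (t : ℕ) :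
    C.run x = (C.gates.drop t).foldl (fun v g => applyGate g v) (C.stateAfter x t) := by
  rw [stateAfter, ← List.foldl_append, List.take_append_drop, run]

def wireFun (t : ℕ) (w : Fin ℓ) : (Fin n → Bool) → Bool :=
  fun x => C.stateAfter x t w

theorem wireFun_succ {t : ℕ} (ht : t < C.gates.length) :
    C.wireFun (t + 1) = comparator C.gates[t].1 C.gates[t].2 (C.wireFun t) := by
  funext w x
  simp only [wireFun, stateAfter_succ C x ht, applyGate, comparator]
  split_ifs <;> rfl

theorem not_symmGen_wireFun_of_not_uselessAt {i : Fin C.gates.length} (h : ¬ C.UselessAt i) :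
    ¬ C.wireFun i (C.gates.get i).1 ≶ C.wireFun i (C.gates.get i).2 := by
  simp only [UselessAt, Type1UselessAt, Type2UselessAt, not_or, not_forall, not_not] at h
  obtain ⟨⟨x₁, h₁⟩, ⟨x₂, h₂⟩⟩ := h
  simp only [gateIn, Prod.mk.injEq] at h₁ h₂
  rintro (hle | hge)
  · exact absurd (hle x₁) (by simp only [wireFun, h₁.1, h₁.2]; simp)
  · exact absurd (hge x₂) (by simp only [wireFun, h₂.1, h₂.2]; simp)

theorem two_mul_le_card_comparablePairs (h : ∀ i, ¬ C.UselessAt i) {t : ℕ}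
    (ht : t ≤ C.gates.length) : 2 * t ≤ #(comparablePairs (C.wireFun t)) := by
  induction t with
  | zero => simp
  | succ t ih =>
    have hlt : t < C.gates.length := ht
    have hstep := card_comparablePairs_add_two_le (C.distinct _ (List.getElem_mem hlt))
      (C.not_symmGen_wireFun_of_not_uselessAt (h ⟨t, hlt⟩))
    rw [C.wireFun_succ hlt]
    linarith [ih hlt.le]

theorem length_le_of_forall_not_uselessAt (h : ∀ i, ¬ C.UselessAt i) :
    C.gates.length ≤ ℓ * (ℓ - 1) / 2 := by
  have hlow := C.two_mul_le_card_comparablePairs h le_rfl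
  have hup := card_comparablePairs_le (C.wireFun C.gates.length)
  rw [Fintype.card_fin] at hup
  omega

end CompCircuit

namespace CompCircuit

variable {n ℓ : ℕ}

theorem applyGate_eq_self {g : Fin ℓ × Fin ℓ} {v : Fin ℓ → Bool}
    (h : ¬(v g.1 = true ∧ v g.2 = false)) : applyGate g v = v := by
  funext w
  unfold applyGate
  split_ifs with h₁ h₂ <;> subst_vars <;> revert h <;> cases v g.1 <;> cases v g.2 <;> simp

theorem applyGate_eq_comp_swap {g : Fin ℓ × Fin ℓ} {v : Fin ℓ → Bool}
    (h : ¬(v g.1 = false ∧ v g.2 = true)) : applyGate g v = v ∘ Equiv.swap g.1 g.2 := by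
  funext w
  unfold applyGate
  split_ifs with h₁ h₂ <;> subst_vars
  · rw [Function.comp_apply, Equiv.swap_apply_left]
    revert h; cases v g.1 <;> cases v g.2 <;> simp
  · rw [Function.comp_apply, Equiv.swap_apply_right]
    revert h; cases v g.1 <;> cases v g.2 <;> simp
  · rw [Function.comp_apply, Equiv.swap_apply_of_ne_of_ne h₁ h₂]

theorem applyGate_map_comp (π : Equiv.Perm (Fin ℓ)) (g : Fin ℓ × Fin ℓ) (v : Fin ℓ → Bool) :
    applyGate g (v ∘ π) = applyGate (Prod.map π π g) v ∘ π := by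
  funext w
  simp [applyGate, π.injective.eq_iff]

theorem foldl_applyGate_comp (π : Equiv.Perm (Fin ℓ)) (gs : List (Fin ℓ × Fin ℓ))
    (v : Fin ℓ → Bool) :
    gs.foldl (fun v g => applyGate g v) (v ∘ π) =
      (gs.map (Prod.map π π)).foldl (fun v g => applyGate g v) v ∘ π := by
  induction gs generalizing v with
  | nil => rfl
  | cons g gs ih => simp only [List.foldl_cons, List.map_cons, applyGate_map_comp, ih]

def eraseGate (C : CompCircuit n ℓ) (i : ℕ) (π : Equiv.Perm (Fin ℓ)) : CompCircuit n ℓ where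
  label := C.label
  gates := C.gates.take i ++ (C.gates.drop (i + 1)).map (Prod.map π π)
  distinct := by
    simp only [List.mem_append, List.mem_map]
    rintro _ (hg | ⟨g, hg, rfl⟩)
    · exact C.distinct _ (List.mem_of_mem_take hg)
    · exact π.injective.ne (C.distinct g (List.mem_of_mem_drop hg))
  out := π C.out

variable (C : CompCircuit n ℓ)

theorem length_eraseGate_lt {i : ℕ} (hi : i < C.gates.length) (π : Equiv.Perm (Fin ℓ)) :
    (C.eraseGate i π).gates.length < C.gates.length := by
  simp only [eraseGate, List.length_append, List.length_take, List.length_map, List.length_drop]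
  omega

theorem eval_eraseGate {i : ℕ} (hi : i < C.gates.length) {π : Equiv.Perm (Fin ℓ)}
    (hπ : ∀ x, applyGate C.gates[(i : ℕ)] (C.stateAfter x i) = C.stateAfter x i ∘ π)
    (x : Fin n → Bool) : (C.eraseGate i π).eval x = C.eval x := by
  rw [eval, eval, run_eq_foldl_drop C x i, List.drop_eq_getElem_cons hi, List.foldl_cons, hπ,
    foldl_applyGate_comp]
  simp only [eraseGate, run, List.foldl_append]
  rfl

theorem exists_shorter_of_uselessAt {i : Fin C.gates.length} (h : C.UselessAt i) :
    ∃ C' : CompCircuit n ℓ, C'.gates.length < C.gates.length ∧ ∀ x, C'.eval x = C.eval x := by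
  suffices ∃ π : Equiv.Perm (Fin ℓ),
      ∀ x, applyGate C.gates[(i : ℕ)] (C.stateAfter x i) = C.stateAfter x i ∘ π by
    obtain ⟨π, hπ⟩ := this
    exact ⟨C.eraseGate i π, C.length_eraseGate_lt i.isLt π, C.eval_eraseGate i.isLt hπ⟩
  rcases h with h | h
  · refine ⟨1, fun x => applyGate_eq_self fun hx => h x ?_⟩
    simpa [gateIn] using hx
  · refine ⟨Equiv.swap _ _, fun x => applyGate_eq_comp_swap fun hx => h x ?_⟩
    simpa [gateIn] using hx

end CompCircuit

theorem exists_equivalent_small_circuit_general {n ℓ : ℕ} (C : CompCircuit n ℓ) :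
    ∃ C' : CompCircuit n ℓ, C'.gates.length ≤ ℓ * (ℓ - 1) / 2 ∧
      ∀ x : Fin n → Bool, C'.eval x = C.eval x := by
  classical
  have hex : ∃ k, ∃ C' : CompCircuit n ℓ, C'.gates.length = k ∧ ∀ x, C'.eval x = C.eval x :=
    ⟨_, C, rfl, fun _ => rfl⟩
  obtain ⟨C', hlen, hC'⟩ := Nat.find_spec hex
  refine ⟨C', C'.length_le_of_forall_not_uselessAt fun i hi => ?_, hC'⟩
  obtain ⟨C'', hlt, hC''⟩ := C'.exists_shorter_of_uselessAt hi
  exact Nat.find_min hex (hlen ▸ hlt) ⟨C'', rfl, fun x => (hC'' x).trans (hC' x)⟩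

/-- Every comparator circuit with `ℓ > 0` wires has an equivalent comparator
circuit (computing the same Boolean function) with `ℓ` wires and at most `ℓ·(ℓ−1)/2` gates. -/
theorem exists_equivalent_small_circuit {n ℓ : ℕ} (hℓ : 0 < ℓ) (C : CompCircuit n ℓ) :
    ∃ C' : CompCircuit n ℓ, C'.gates.length ≤ ℓ * (ℓ - 1) / 2 ∧
      ∀ x : Fin n → Bool, C'.eval x = C.eval x :=
  exists_equivalent_small_circuit_general C
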